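/- Let s be as in the context (any of the four cases). Let 2 ≤ k ≤ D+1, let η ∈ Δ̄_K^k ∩ (Δ^C ∪ Δ^R), and let η₁, η₂ ∈ (Δ̄_K)₊ with η = η₁ + η₂. Then η₁ ∉ Δ̄_K^k and η₂ ∉ Δ̄_K^k. -/

import Mathlib

/- Common framework: type A_l root system realized in ℝ^{ℕ} (coordinates 1,…,l+1 used),
   the Weyl group as permutations of ℕ acting by permuting coordinates, and the
   Weyl group element s = s₁s₂ of Proposition 4.2 (all four parity cases). -/

noncomputable section

namespace DPW

/-- The ambient vector space (only coordinates 1,…,l+1 are used). -/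
abbrev V : Type := ℕ → ℝ

/-- Standard basis vector e_i. -/
def evec (i : ℕ) : V := fun j => if j = i then 1 else 0

/-- The root e_i − e_j. -/
def rt (i j : ℕ) : V := evec i - evec j

/-- The root system Δ of type A_l. -/
def Delta (l : ℕ) : Set V :=
  {v | ∃ i j, 1 ≤ i ∧ i ≤ l + 1 ∧ 1 ≤ j ∧ j ≤ l + 1 ∧ i ≠ j ∧ v = rt i j}

/-- Positive roots Δ₊. -/
def DeltaPos (l : ℕ) : Set V :=
  {v | ∃ i j, 1 ≤ i ∧ i < j ∧ j ≤ l + 1 ∧ v = rt i j}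

/-- Negative roots Δ₋ = −Δ₊. -/
def DeltaNeg (l : ℕ) : Set V := {v | -v ∈ DeltaPos l}

/-- Action of a permutation on V : (σ·v)_j = v_{σ⁻¹(j)}. -/
def pact (σ : Equiv.Perm ℕ) (v : V) : V := fun j => v (σ⁻¹ j)

/-- row(e_a − e_b) = a. -/
def rowOf (v : V) : ℕ := sInf {a | v a = 1}

/-- col(e_a − e_b) = b. -/
def colOf (v : V) : ℕ := sInf {b | v b = (-1 : ℝ)}

/-- Product of the simple reflections s_{α_i} = (i, i+1) for i in a list. -/
def swapProd (idxs : List ℕ) : Equiv.Perm ℕ :=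
  (idxs.map (fun i => Equiv.swap i (i + 1))).prod

/-- The Weyl group element s = s₁s₂ (cases (i)–(iv) according to the parities of
    m = ⌊(l′−1)/2⌋ and l′; here p = l − l′ and s_γ = (m+1, m+p+2)). -/
def weylS (l l' : ℕ) : Equiv.Perm ℕ :=
  let m := (l' - 1) / 2
  let p := l - l'
  if m % 2 = 0 then
    if l' % 2 = 1 then
      -- case (i)
      (swapProd (List.range' 2 (m / 2) 2) * swapProd (List.range' (m + p + 2) (m / 2) 2)) *
        (swapProd (List.range' 1 (m / 2) 2) * Equiv.swap (m + 1) (m + p + 2) *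
          swapProd (List.range' (m + p + 3) (m / 2) 2))
    else
      -- case (ii)
      (swapProd (List.range' 2 (m / 2) 2) * swapProd (List.range' (m + p + 2) (m / 2 + 1) 2)) *
        (swapProd (List.range' 1 (m / 2) 2) * Equiv.swap (m + 1) (m + p + 2) *
          swapProd (List.range' (m + p + 3) (m / 2) 2))
  else
    if l' % 2 = 1 then
      -- case (iii)
      (swapProd (List.range' 1 ((m + 1) / 2) 2) *
          swapProd (List.range' (m + p + 2) ((m + 1) / 2) 2)) *
        (swapProd (List.range' 2 ((m - 1) / 2) 2) * Equiv.swap (m + 1) (m + p + 2) *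
          swapProd (List.range' (m + p + 3) ((m - 1) / 2) 2))
    else
      -- case (iv)
      (swapProd (List.range' 1 ((m + 1) / 2) 2) *
          swapProd (List.range' (m + p + 2) ((m + 1) / 2) 2)) *
        (swapProd (List.range' 2 ((m - 1) / 2) 2) * Equiv.swap (m + 1) (m + p + 2) *
          swapProd (List.range' (m + p + 3) ((m + 1) / 2) 2))

/-- Δ_s = {α ∈ Δ₊ : sα ∈ Δ₋}. -/
def DeltaS (l : ℕ) (s : Equiv.Perm ℕ) : Set V :=
  {v ∈ DeltaPos l | pact s v ∈ DeltaNeg l}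

/-- Δ_{s⁻¹} = {α ∈ Δ₊ : s⁻¹α ∈ Δ₋}. -/
def DeltaSinv (l : ℕ) (s : Equiv.Perm ℕ) : Set V :=
  {v ∈ DeltaPos l | pact s⁻¹ v ∈ DeltaNeg l}

/-- (Δ̄_K)₊ = {α ∈ Δ₊ : sα ≠ α}. -/
def DeltaKpos (l : ℕ) (s : Equiv.Perm ℕ) : Set V :=
  {v ∈ DeltaPos l | pact s v ≠ v}

/-- (Δ̄_K)₋ = −(Δ̄_K)₊. -/
def DeltaKneg (l : ℕ) (s : Equiv.Perm ℕ) : Set V := {v | -v ∈ DeltaKpos l s}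

/-- Δ^C = {α ∈ (Δ̄_K)₊ : row(sα) = row(α)}. -/
def DeltaC (l : ℕ) (s : Equiv.Perm ℕ) : Set V :=
  {v ∈ DeltaKpos l s | rowOf (pact s v) = rowOf v}

/-- Δ^R = {α ∈ (Δ̄_K)₊ : col(sα) = col(α)}. -/
def DeltaR (l : ℕ) (s : Equiv.Perm ℕ) : Set V :=
  {v ∈ DeltaKpos l s | colOf (pact s v) = colOf v}

/-- Δ^O = (Δ̄_K)₊ \ (Δ^C ∪ Δ^R). -/
def DeltaO (l : ℕ) (s : Equiv.Perm ℕ) : Set V :=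
  DeltaKpos l s \ (DeltaC l s ∪ DeltaR l s)

/-- Δ₁^O = {α ∈ Δ^O : row(α) ≥ m+p+2}. -/
def DeltaO1 (l : ℕ) (s : Equiv.Perm ℕ) (m p : ℕ) : Set V :=
  {v ∈ DeltaO l s | m + p + 2 ≤ rowOf v}

/-- Δ₂^O = {α ∈ Δ^O : col(α) ≤ m+1}. -/
def DeltaO2 (l : ℕ) (s : Equiv.Perm ℕ) (m : ℕ) : Set V :=
  {v ∈ DeltaO l s | colOf v ≤ m + 1}

/-- Δ₃^O = Δ^O \ (Δ₁^O ∪ Δ₂^O). -/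
def DeltaO3 (l : ℕ) (s : Equiv.Perm ℕ) (m p : ℕ) : Set V :=
  DeltaO l s \ (DeltaO1 l s m p ∪ DeltaO2 l s m)

/-- Δ̄_K^k = {α ∈ (Δ̄_K)₊ : s^{−j}α ∈ (Δ̄_K)₊ for 1 ≤ j ≤ k−1 and s^{−k}α ∈ (Δ̄_K)₋}. -/
def DeltaKk (l : ℕ) (s : Equiv.Perm ℕ) (k : ℕ) : Set V :=
  {v ∈ DeltaKpos l s |
    (∀ j, 1 ≤ j → j ≤ k - 1 → pact (s⁻¹ ^ j) v ∈ DeltaKpos l s) ∧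
      pact (s⁻¹ ^ k) v ∈ DeltaKneg l s}

/-- d(α) = min{k ≥ 1 : s^{−k}α ∈ Δ₋}. -/
def dd (l : ℕ) (s : Equiv.Perm ℕ) (v : V) : ℕ :=
  sInf {k | 1 ≤ k ∧ pact (s⁻¹ ^ k) v ∈ DeltaNeg l}

/-- Δ_Z = {e_i − e_j : m+2 ≤ i, j ≤ m+p+1, i ≠ j}. -/
def DeltaZ (m p : ℕ) : Set V :=
  {v | ∃ i j, m + 2 ≤ i ∧ i ≤ m + p + 1 ∧ m + 2 ≤ j ∧ j ≤ m + p + 1 ∧ i ≠ j ∧ v = rt i j}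

/-- The ⟨s⟩-orbit of a vector. -/
def orbitOf (s : Equiv.Perm ℕ) (v : V) : Set V := {w | ∃ n : ℤ, w = pact (s ^ n) v}

/-- The set P_κ (for κ ∈ Δ̄_K^k). -/
def Pk (l : ℕ) (s : Equiv.Perm ℕ) (k : ℕ) (κ : V) : Set (V × V) :=
  {q | (∃ i, 2 ≤ i ∧ i ≤ k - 1 ∧ q.1 ∈ DeltaKk l s i) ∧ q.2 ∈ DeltaKk l s k ∧ κ = q.1 + q.2}

/-- The set P′_κ (for κ ∈ Δ̄_K^k). -/
def Pk' (l : ℕ) (s : Equiv.Perm ℕ) (k : ℕ) (κ : V) : Set (V × V) :=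
  {q | q.1 ∈ DeltaKk l s k ∧ q.2 ∈ DeltaKk l s k ∧ κ = q.1 + q.2}

/-- The eigenvector v^λ of case (i) (m even, l′ = 2m+1 odd). -/
def vlam (m p : ℕ) (lam : ℂ) : ℕ → ℂ := fun j =>
  if j = 0 then 0
  else if j ≤ m + 1 then
    (if j % 2 = 1 then lam ^ ((4 * m + 5 - j) / 2) else lam ^ (j / 2))
  else if j ≤ m + p + 1 then 0
  else if j ≤ m + p + m + 2 then
    (if (j - (m + p)) % 2 = 0 then lam ^ ((m + (j - (m + p))) / 2)
     else lam ^ ((3 * m + 5 - (j - (m + p))) / 2))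
  else 0



-- ==================== auxiliary machinery ====================

/-- Explicit form of a product of swaps on an arithmetic progression of step 2. -/
def sw (a n x : ℕ) : ℕ :=
  if a ≤ x ∧ x < a + 2*n then (if x % 2 = a % 2 then x + 1 else x - 1) else x

/-- Explicit form of a single swap. -/
def tw (a b x : ℕ) : ℕ := if x = a then b else if x = b then a else x

/-- The uniform explicit formula for the permutation `weylS l l'`, where
    `m = (l'-1)/2`, `p = l - l'`, `N = l' - m`. -/
def SF (m p N x : ℕ) : ℕ :=
  if 1 ≤ x ∧ x ≤ m + 1 then
    (if x = m + 1 then m + p + 3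
     else if x % 2 = m % 2 then (if 3 ≤ x then x - 2 else 3 - x)
     else x + 2)
  else if m + p + 2 ≤ x ∧ x ≤ m + p + 1 + N then
    (if x = m + p + 2 then m
     else if (x - (m + p + 1)) % 2 = 0 then
       (if x - (m + p + 1) ≤ N - 2 then x + 2
        else if x - (m + p + 1) = N then x - 1 else x + 1)
     else x - 2)
  else x

/-- Graph relation of `sw`. -/
def swR (a n x y : ℕ) : Prop :=
  (a ≤ x ∧ x < a + 2*n ∧ ((x % 2 = a % 2 ∧ y = x + 1) ∨ (x % 2 ≠ a % 2 ∧ y = x - 1))) ∨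
    (¬(a ≤ x ∧ x < a + 2*n) ∧ y = x)

/-- Graph relation of `tw`. -/
def twR (a b x y : ℕ) : Prop :=
  (x = a ∧ y = b) ∨ (x ≠ a ∧ x = b ∧ y = a) ∨ (x ≠ a ∧ x ≠ b ∧ y = x)

lemma swR_self (a n x : ℕ) : swR a n x (sw a n x) := by
  unfold swR sw; split_ifs <;> omega

lemma twR_self (a b x : ℕ) : twR a b x (tw a b x) := by
  unfold twR tw; split_ifs <;> omega

lemma swapProd_range'_apply : ∀ (n a x : ℕ),
    (swapProd (List.range' a n 2)) x =
      if a ≤ x ∧ x < a + 2*n then (if x % 2 = a % 2 then x + 1 else x - 1) else x := by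
  intro n
  induction n with
  | zero =>
    intro a x
    rw [if_neg (by omega)]
    simp [swapProd, List.range']
  | succ n ih =>
    intro a x
    rw [List.range'_succ]
    show (Equiv.swap a (a+1) * swapProd (List.range' (a+2) n 2)) x = _
    rw [Equiv.Perm.mul_apply, ih (a+2) x, Equiv.swap_apply_def]
    split_ifs <;> omega

lemma swapProd_eq_sw (a n : ℕ) : ⇑(swapProd (List.range' a n 2)) = sw a n :=
  funext fun x => (swapProd_range'_apply n a x).trans rfl

lemma swap_eq_tw (u v : ℕ) : ⇑(Equiv.swap u v) = tw u v :=
  funext fun x => by rw [Equiv.swap_apply_def]; rfl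

set_option maxHeartbeats 40000000 in
lemma comp_eval1 (m p N x : ℕ) (hm2 : 2 ≤ m) (hme : m % 2 = 0) (hN : N = m + 1) :
    sw 2 (m/2) (sw (m+p+2) (m/2) (sw 1 (m/2) (tw (m+1) (m+p+2) (sw (m+p+3) (m/2) x)))) = SF m p N x := by
  have h1 := swR_self (m+p+3) (m/2) x
  set y1 := sw (m+p+3) (m/2) x with hy1
  have h2 := twR_self (m+1) (m+p+2) y1
  set y2 := tw (m+1) (m+p+2) y1 with hy2
  have h3 := swR_self 1 (m/2) y2
  set y3 := sw 1 (m/2) y2 with hy3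
  have h4 := swR_self (m+p+2) (m/2) y3
  set y4 := sw (m+p+2) (m/2) y3 with hy4
  have h5 := swR_self 2 (m/2) y4
  set y5 := sw 2 (m/2) y4 with hy5
  clear hy1 hy2 hy3 hy4 hy5
  show y5 = SF m p N x
  rcases h1 with ⟨u1,u2,(⟨u3,u4⟩|⟨u3,u4⟩)⟩|⟨u1,u2⟩ <;>
  rcases h2 with ⟨v1,v2⟩|⟨v1,v2,v3⟩|⟨v1,v2,v3⟩ <;> (try (exfalso; omega)) <;>
  rcases h3 with ⟨w1,w2,(⟨w3,w4⟩|⟨w3,w4⟩)⟩|⟨w1,w2⟩ <;> (try (exfalso; omega)) <;>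
  rcases h4 with ⟨r1,r2,(⟨r3,r4⟩|⟨r3,r4⟩)⟩|⟨r1,r2⟩ <;> (try (exfalso; omega)) <;>
  rcases h5 with ⟨s1,s2,(⟨s3,s4⟩|⟨s3,s4⟩)⟩|⟨s1,s2⟩ <;> (try (exfalso; omega)) <;>
  (unfold SF; split_ifs <;> omega)

set_option maxHeartbeats 40000000 in
lemma comp_eval2 (m p N x : ℕ) (hm2 : 2 ≤ m) (hme : m % 2 = 0) (hN : N = m + 2) :
    sw 2 (m/2) (sw (m+p+2) (m/2+1) (sw 1 (m/2) (tw (m+1) (m+p+2) (sw (m+p+3) (m/2) x)))) = SF m p N x := by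
  have h1 := swR_self (m+p+3) (m/2) x
  set y1 := sw (m+p+3) (m/2) x with hy1
  have h2 := twR_self (m+1) (m+p+2) y1
  set y2 := tw (m+1) (m+p+2) y1 with hy2
  have h3 := swR_self 1 (m/2) y2
  set y3 := sw 1 (m/2) y2 with hy3
  have h4 := swR_self (m+p+2) (m/2+1) y3
  set y4 := sw (m+p+2) (m/2+1) y3 with hy4
  have h5 := swR_self 2 (m/2) y4
  set y5 := sw 2 (m/2) y4 with hy5
  clear hy1 hy2 hy3 hy4 hy5
  show y5 = SF m p N x
  rcases h1 with ⟨u1,u2,(⟨u3,u4⟩|⟨u3,u4⟩)⟩|⟨u1,u2⟩ <;>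
  rcases h2 with ⟨v1,v2⟩|⟨v1,v2,v3⟩|⟨v1,v2,v3⟩ <;> (try (exfalso; omega)) <;>
  rcases h3 with ⟨w1,w2,(⟨w3,w4⟩|⟨w3,w4⟩)⟩|⟨w1,w2⟩ <;> (try (exfalso; omega)) <;>
  rcases h4 with ⟨r1,r2,(⟨r3,r4⟩|⟨r3,r4⟩)⟩|⟨r1,r2⟩ <;> (try (exfalso; omega)) <;>
  rcases h5 with ⟨s1,s2,(⟨s3,s4⟩|⟨s3,s4⟩)⟩|⟨s1,s2⟩ <;> (try (exfalso; omega)) <;>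
  (unfold SF; split_ifs <;> omega)

set_option maxHeartbeats 40000000 in
lemma comp_eval3 (m p N x : ℕ) (hm2 : 2 ≤ m) (hme : m % 2 = 1) (hN : N = m + 1) :
    sw 1 ((m+1)/2) (sw (m+p+2) ((m+1)/2) (sw 2 ((m-1)/2) (tw (m+1) (m+p+2) (sw (m+p+3) ((m-1)/2) x)))) = SF m p N x := by
  have h1 := swR_self (m+p+3) ((m-1)/2) x
  set y1 := sw (m+p+3) ((m-1)/2) x with hy1
  have h2 := twR_self (m+1) (m+p+2) y1
  set y2 := tw (m+1) (m+p+2) y1 with hy2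
  have h3 := swR_self 2 ((m-1)/2) y2
  set y3 := sw 2 ((m-1)/2) y2 with hy3
  have h4 := swR_self (m+p+2) ((m+1)/2) y3
  set y4 := sw (m+p+2) ((m+1)/2) y3 with hy4
  have h5 := swR_self 1 ((m+1)/2) y4
  set y5 := sw 1 ((m+1)/2) y4 with hy5
  clear hy1 hy2 hy3 hy4 hy5
  show y5 = SF m p N x
  rcases h1 with ⟨u1,u2,(⟨u3,u4⟩|⟨u3,u4⟩)⟩|⟨u1,u2⟩ <;>
  rcases h2 with ⟨v1,v2⟩|⟨v1,v2,v3⟩|⟨v1,v2,v3⟩ <;> (try (exfalso; omega)) <;>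
  rcases h3 with ⟨w1,w2,(⟨w3,w4⟩|⟨w3,w4⟩)⟩|⟨w1,w2⟩ <;> (try (exfalso; omega)) <;>
  rcases h4 with ⟨r1,r2,(⟨r3,r4⟩|⟨r3,r4⟩)⟩|⟨r1,r2⟩ <;> (try (exfalso; omega)) <;>
  rcases h5 with ⟨s1,s2,(⟨s3,s4⟩|⟨s3,s4⟩)⟩|⟨s1,s2⟩ <;> (try (exfalso; omega)) <;>
  (unfold SF; split_ifs <;> omega)

set_option maxHeartbeats 40000000 in
lemma comp_eval4 (m p N x : ℕ) (hm2 : 2 ≤ m) (hme : m % 2 = 1) (hN : N = m + 2) :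
    sw 1 ((m+1)/2) (sw (m+p+2) ((m+1)/2) (sw 2 ((m-1)/2) (tw (m+1) (m+p+2) (sw (m+p+3) ((m+1)/2) x)))) = SF m p N x := by
  have h1 := swR_self (m+p+3) ((m+1)/2) x
  set y1 := sw (m+p+3) ((m+1)/2) x with hy1
  have h2 := twR_self (m+1) (m+p+2) y1
  set y2 := tw (m+1) (m+p+2) y1 with hy2
  have h3 := swR_self 2 ((m-1)/2) y2
  set y3 := sw 2 ((m-1)/2) y2 with hy3
  have h4 := swR_self (m+p+2) ((m+1)/2) y3
  set y4 := sw (m+p+2) ((m+1)/2) y3 with hy4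
  have h5 := swR_self 1 ((m+1)/2) y4
  set y5 := sw 1 ((m+1)/2) y4 with hy5
  clear hy1 hy2 hy3 hy4 hy5
  show y5 = SF m p N x
  rcases h1 with ⟨u1,u2,(⟨u3,u4⟩|⟨u3,u4⟩)⟩|⟨u1,u2⟩ <;>
  rcases h2 with ⟨v1,v2⟩|⟨v1,v2,v3⟩|⟨v1,v2,v3⟩ <;> (try (exfalso; omega)) <;>
  rcases h3 with ⟨w1,w2,(⟨w3,w4⟩|⟨w3,w4⟩)⟩|⟨w1,w2⟩ <;> (try (exfalso; omega)) <;>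
  rcases h4 with ⟨r1,r2,(⟨r3,r4⟩|⟨r3,r4⟩)⟩|⟨r1,r2⟩ <;> (try (exfalso; omega)) <;>
  rcases h5 with ⟨s1,s2,(⟨s3,s4⟩|⟨s3,s4⟩)⟩|⟨s1,s2⟩ <;> (try (exfalso; omega)) <;>
  (unfold SF; split_ifs <;> omega)

-- ==================== root-system bookkeeping ====================

lemma perm_apply_inv_self (f : Equiv.Perm ℕ) (x : ℕ) : f (f⁻¹ x) = x := f.apply_symm_apply x

lemma perm_inv_apply_self (f : Equiv.Perm ℕ) (x : ℕ) : f⁻¹ (f x) = x := f.symm_apply_apply x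

lemma rt_inj {i j i' j' : ℕ} (h' : i' ≠ j') (h : rt i j = rt i' j') : i' = i ∧ j' = j := by
  have h1 := congrFun h i'
  have h2 := congrFun h j'
  simp only [rt, evec, Pi.sub_apply, eq_self_iff_true, if_true, if_neg h',
    if_neg (Ne.symm h')] at h1 h2
  constructor
  · split_ifs at h1 <;> first | assumption | norm_num at h1
  · split_ifs at h2 <;> first | assumption | norm_num at h2

lemma neg_rt (i j : ℕ) : -rt i j = rt j i := by
  funext x; simp only [rt, evec, Pi.neg_apply, Pi.sub_apply]; ring

lemma pact_rt (σ : Equiv.Perm ℕ) (i j : ℕ) : pact σ (rt i j) = rt (σ i) (σ j) := by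
  funext x
  simp only [pact, rt, evec, Pi.sub_apply]
  have e1 : σ⁻¹ x = i ↔ x = σ i := by
    constructor <;> intro hh
    · rw [← hh, perm_apply_inv_self]
    · rw [hh, perm_inv_apply_self]
  have e2 : σ⁻¹ x = j ↔ x = σ j := by
    constructor <;> intro hh
    · rw [← hh, perm_apply_inv_self]
    · rw [hh, perm_inv_apply_self]
  simp only [e1, e2]

lemma rt_mem_DeltaPos {l i j : ℕ} : rt i j ∈ DeltaPos l ↔ 1 ≤ i ∧ i < j ∧ j ≤ l + 1 := by
  constructor
  · rintro ⟨i', j', h1, h2, h3, heq⟩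
    obtain ⟨e1, e2⟩ := rt_inj (by omega : i' ≠ j') heq
    omega
  · rintro ⟨h1, h2, h3⟩; exact ⟨i, j, h1, h2, h3, rfl⟩

lemma rt_mem_DeltaKpos {l i j : ℕ} {s : Equiv.Perm ℕ} :
    rt i j ∈ DeltaKpos l s ↔ 1 ≤ i ∧ i < j ∧ j ≤ l + 1 ∧ ¬(s i = i ∧ s j = j) := by
  unfold DeltaKpos
  rw [Set.mem_sep_iff, rt_mem_DeltaPos, pact_rt]
  constructor
  · rintro ⟨⟨h1, h2, h3⟩, hne⟩
    exact ⟨h1, h2, h3, fun ⟨e1, e2⟩ => hne (by rw [e1, e2])⟩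
  · rintro ⟨h1, h2, h3, hne⟩
    refine ⟨⟨h1, h2, h3⟩, fun heq => hne ?_⟩
    obtain ⟨e1, e2⟩ := rt_inj (by omega : i ≠ j) heq
    exact ⟨e1.symm, e2.symm⟩

lemma rt_mem_DeltaKneg {l i j : ℕ} {s : Equiv.Perm ℕ} :
    rt i j ∈ DeltaKneg l s ↔ 1 ≤ j ∧ j < i ∧ i ≤ l + 1 ∧ ¬(s i = i ∧ s j = j) := by
  unfold DeltaKneg
  rw [Set.mem_setOf_eq, neg_rt, rt_mem_DeltaKpos]
  constructor <;> rintro ⟨h1, h2, h3, h4⟩ <;> exact ⟨h1, h2, h3, fun ⟨e1, e2⟩ => h4 ⟨e2, e1⟩⟩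

lemma rowOf_rt {i j : ℕ} (h : i ≠ j) : rowOf (rt i j) = i := by
  unfold rowOf
  have hset : {a | rt i j a = 1} = {i} := by
    ext x
    simp only [Set.mem_setOf_eq, Set.mem_singleton_iff, rt, evec, Pi.sub_apply]
    constructor
    · intro hx; split_ifs at hx <;> first | assumption | norm_num at hx
    · rintro rfl; rw [if_pos rfl, if_neg h]; norm_num
  rw [hset, csInf_singleton]

lemma colOf_rt {i j : ℕ} (h : i ≠ j) : colOf (rt i j) = j := by
  unfold colOf
  have hset : {b | rt i j b = (-1 : ℝ)} = {j} := by
    ext x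
    simp only [Set.mem_setOf_eq, Set.mem_singleton_iff, rt, evec, Pi.sub_apply]
    constructor
    · intro hx; split_ifs at hx <;> first | assumption | norm_num at hx
    · rintro rfl; rw [if_pos rfl, if_neg (Ne.symm h)]; norm_num
  rw [hset, csInf_singleton]

-- ==================== permutation helpers ====================

lemma perm_pow_fix (σ : Equiv.Perm ℕ) {x : ℕ} (h : σ x = x) : ∀ n, (σ ^ n) x = x := by
  intro n
  induction n with
  | zero => rfl
  | succ n ih => rw [pow_succ, Equiv.Perm.mul_apply, h, ih]

lemma inv_fix (σ : Equiv.Perm ℕ) {x : ℕ} (h : σ x = x) : σ⁻¹ x = x := by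
  conv_lhs => rw [← h]
  rw [perm_inv_apply_self]

lemma step_lemma (s : Equiv.Perm ℕ) (b j : ℕ) : s ((s⁻¹ ^ (j+1)) b) = (s⁻¹ ^ j) b := by
  rw [pow_succ', Equiv.Perm.mul_apply, perm_apply_inv_self]

lemma s_pow_inv_comm (s : Equiv.Perm ℕ) (k x : ℕ) : s ((s⁻¹ ^ k) x) = (s⁻¹ ^ k) (s x) := by
  have hc : s * s⁻¹ ^ k = s⁻¹ ^ k * s := ((Commute.refl s).inv_right.pow_right k).eq
  rw [← Equiv.Perm.mul_apply, hc, Equiv.Perm.mul_apply]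

-- ==================== decomposition of a sum of two positive roots ====================

lemma rt_add_decomp {a b a₁ b₁ a₂ b₂ : ℕ} (hab : a < b) (h1 : a₁ < b₁) (h2 : a₂ < b₂)
    (h : rt a b = rt a₁ b₁ + rt a₂ b₂) :
    (a₁ = a ∧ b₁ = a₂ ∧ b₂ = b) ∨ (a₂ = a ∧ b₂ = a₁ ∧ b₁ = b) := by
  have H : ∀ x : ℕ, rt a b x = rt a₁ b₁ x + rt a₂ b₂ x := fun x => congrFun h x
  have H' : ∀ x : ℕ,
      ((if x = a then (1:ℝ) else 0) - (if x = b then 1 else 0)) =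
        ((if x = a₁ then (1:ℝ) else 0) - (if x = b₁ then 1 else 0)) +
          ((if x = a₂ then (1:ℝ) else 0) - (if x = b₂ then 1 else 0)) := by
    intro x
    have := H x
    simpa only [rt, evec, Pi.sub_apply] using this
  have step1 : a₁ = a ∨ a₂ = a := by
    by_contra hcon
    push_neg at hcon
    have HH := H' a
    rw [if_pos rfl, if_neg (show a ≠ b by omega),
      if_neg (show a ≠ a₁ from fun hh => hcon.1 hh.symm),
      if_neg (show a ≠ a₂ from fun hh => hcon.2 hh.symm)] at HH
    split_ifs at HH <;> norm_num at HH
  have step2 : b₁ = b ∨ b₂ = b := by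
    by_contra hcon
    push_neg at hcon
    have HH := H' b
    rw [if_pos rfl, if_neg (show b ≠ a by omega),
      if_neg (show b ≠ b₁ from fun hh => hcon.1 hh.symm),
      if_neg (show b ≠ b₂ from fun hh => hcon.2 hh.symm)] at HH
    split_ifs at HH <;> norm_num at HH
  have ne1 : ¬(a₁ = a ∧ b₁ = b) := by
    rintro ⟨e1, e2⟩
    have HH := H' a₂
    rw [e1, e2, if_pos rfl, if_neg (show a₂ ≠ b₂ by omega)] at HH
    split_ifs at HH <;> norm_num at HH <;> omega
  have ne2 : ¬(a₂ = a ∧ b₂ = b) := by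
    rintro ⟨e1, e2⟩
    have HH := H' a₁
    rw [e1, e2, if_pos rfl, if_neg (show a₁ ≠ b₁ by omega)] at HH
    split_ifs at HH <;> norm_num at HH <;> omega
  rcases step1 with e | e
  · left
    have hb2 : b₂ = b := by
      rcases step2 with f | f
      · exact absurd ⟨e, f⟩ ne1
      · exact f
    refine ⟨e, ?_, hb2⟩
    have HH := H' b₁
    rw [e, hb2, if_pos rfl] at HH
    split_ifs at HH <;> first | assumption | linarith
  · right
    have hb1 : b₁ = b := by
      rcases step2 with f | f
      · exact f
      · exact absurd ⟨e, f⟩ ne2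
    refine ⟨e, ?_, hb1⟩
    have HH := H' b₂
    rw [e, hb1, if_pos rfl] at HH
    split_ifs at HH <;> first | assumption | linarith

-- ==================== facts about the explicit formula SF ====================

lemma SF_fix_iff (m p N x : ℕ) (hm2 : 2 ≤ m) (hN1 : m + 1 ≤ N) :
    SF m p N x = x ↔ (x = 0 ∨ (m + 2 ≤ x ∧ x ≤ m + p + 1) ∨ m + p + N + 2 ≤ x) := by
  unfold SF; split_ifs <;> omega

lemma SF_top (m p N : ℕ) (hm2 : 2 ≤ m) : SF m p N (m + 1) = m + p + 3 := by
  unfold SF; split_ifs <;> omega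

lemma SF_mid (m p N : ℕ) (hm2 : 2 ≤ m) (hN1 : m + 1 ≤ N) : SF m p N (m + p + 2) = m := by
  unfold SF; split_ifs <;> omega

lemma SF_claimA (m p N x y : ℕ) (hm2 : 2 ≤ m) (hN1 : m + 1 ≤ N)
    (hx : x ≤ m + 1) (hy : SF m p N x = y) (h2 : m + 2 ≤ y) : x = m + 1 ∧ y = m + p + 3 := by
  unfold SF at hy; split_ifs at hy <;> omega

lemma SF_claimB (m p N x y : ℕ) (hm2 : 2 ≤ m) (hN1 : m + 1 ≤ N)
    (hx1 : m + 2 ≤ x) (hx2 : x ≤ m + p + N + 1) (hy : SF m p N x = y) (h2 : y ≤ m + 1) :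
    x = m + p + 2 ∧ y = m := by
  unfold SF at hy; split_ifs at hy <;> omega

lemma SF_claimC (m p N x y : ℕ) (hm2 : 2 ≤ m) (hN1 : m + 1 ≤ N)
    (hx1 : m + p + 2 ≤ x) (hx2 : x ≤ m + p + N + 1) (hy : SF m p N x = y) (h2 : y ≤ m + p + 2) :
    (x = m + p + 2 ∧ y = m) ∨ (x = m + p + 4 ∧ y = m + p + 2) := by
  unfold SF at hy; split_ifs at hy <;> omega

lemma SF_claimD (m p N x y : ℕ) (hm2 : 2 ≤ m) (hN1 : m + 1 ≤ N)
    (hx : x ≤ m + 1) (hy : SF m p N x = y) (h2 : m + 1 ≤ y) :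
    (x = m + 1 ∧ y = m + p + 3) ∨ (x = m - 1 ∧ y = m + 1) := by
  unfold SF at hy; split_ifs at hy <;> omega

-- ==================== the two runs of the cycle of s ====================

/-- The run of `s` through the block `[m+p+2, m+p+N+1]` : `Rseq t = s^t (m+1)` for `1 ≤ t ≤ N`. -/
def Rseq (m p N t : ℕ) : ℕ := min (m + p + 1 + 2*t) (m + p + 2 + 2*(N - t))

/-- The run of `s` through the block `[1, m+1]` : `Lseq t = s^t (m+p+2)` for `1 ≤ t ≤ m+1`. -/
def Lseq (m t : ℕ) : ℕ := max (m + 2 - 2*t) (2*t - (m + 1))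

lemma SF_Rstep (m p N t : ℕ) (hm2 : 2 ≤ m) (hN1 : m + 1 ≤ N) (hN2 : N ≤ m + 2)
    (ht1 : 1 ≤ t) (ht2 : t < N) : SF m p N (Rseq m p N t) = Rseq m p N (t + 1) := by
  unfold SF Rseq; split_ifs <;> omega

lemma SF_Lstep (m p N t : ℕ) (hm2 : 2 ≤ m) (hN1 : m + 1 ≤ N)
    (ht1 : 1 ≤ t) (ht2 : t ≤ m) : SF m p N (Lseq m t) = Lseq m (t + 1) := by
  unfold SF Lseq; split_ifs <;> omega

/-- Backtracking along the `R`-run: if `C j = s⁻ʲ c`-style sequence hits `m+1` at time `K`,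
then earlier values follow `Rseq`. -/
lemma backtrackR (m p N : ℕ) (s : Equiv.Perm ℕ) (hsf : ∀ x, s x = SF m p N x)
    (hm2 : 2 ≤ m) (hN1 : m + 1 ≤ N) (hN2 : N ≤ m + 2)
    (C : ℕ → ℕ) (hstep : ∀ j, s (C (j + 1)) = C j) (K : ℕ) (hK : C K = m + 1) :
    ∀ t, 1 ≤ t → t ≤ N → t ≤ K → C (K - t) = Rseq m p N t := by
  intro t
  induction t with
  | zero => intro h1 _ _; omega
  | succ t ih =>
    intro h1 h2 h3
    rcases Nat.eq_zero_or_pos t with rfl | htpos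
    · have hs := hstep (K - 1)
      rw [show K - 1 + 1 = K by omega, hK, hsf] at hs
      rw [← hs, SF_top m p N hm2]
      unfold Rseq; omega
    · have ht := ih (by omega) (by omega) (by omega)
      have hs := hstep (K - (t + 1))
      rw [show K - (t + 1) + 1 = K - t by omega, ht, hsf] at hs
      rw [← hs]
      exact SF_Rstep m p N t hm2 hN1 hN2 htpos (by omega)

/-- Backtracking along the `L`-run. -/
lemma backtrackL (m p N : ℕ) (s : Equiv.Perm ℕ) (hsf : ∀ x, s x = SF m p N x)
    (hm2 : 2 ≤ m) (hN1 : m + 1 ≤ N)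
    (C : ℕ → ℕ) (hstep : ∀ j, s (C (j + 1)) = C j) (K : ℕ) (hK : C K = m + p + 2) :
    ∀ t, 1 ≤ t → t ≤ m + 1 → t ≤ K → C (K - t) = Lseq m t := by
  intro t
  induction t with
  | zero => intro h1 _ _; omega
  | succ t ih =>
    intro h1 h2 h3
    rcases Nat.eq_zero_or_pos t with rfl | htpos
    · have hs := hstep (K - 1)
      rw [show K - 1 + 1 = K by omega, hK, hsf] at hs
      rw [← hs, SF_mid m p N hm2 hN1]
      unfold Lseq; omega
    · have ht := ih (by omega) (by omega) (by omega)
      have hs := hstep (K - (t + 1))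
      rw [show K - (t + 1) + 1 = K - t by omega, ht, hsf] at hs
      rw [← hs]
      exact SF_Lstep m p N t hm2 hN1 htpos (by omega)

-- ==================== the core combinatorial lemma ====================

set_option maxHeartbeats 1600000 in
lemma core (l m p N k a c b : ℕ) (s : Equiv.Perm ℕ)
    (hsf : ∀ x, s x = SF m p N x)
    (hm2 : 2 ≤ m) (hN1 : m + 1 ≤ N) (hN2 : N ≤ m + 2) (hl : l = m + p + N)
    (hk : 2 ≤ k) (hac : a < c) (hcb : c < b)
    (hfix : s a = a ∨ s b = b)
    (hη : rt a b ∈ DeltaKk l s k)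
    (h1p : rt a c ∈ DeltaKpos l s)
    (h2p : rt c b ∈ DeltaKpos l s) :
    rt a c ∉ DeltaKk l s k ∧ rt c b ∉ DeltaKk l s k := by
  obtain ⟨hηp, hηmid, hηend⟩ := hη
  obtain ⟨ha1, -, hbl, hηmv⟩ := rt_mem_DeltaKpos.mp hηp
  obtain ⟨-, -, hcl, h1mv⟩ := rt_mem_DeltaKpos.mp h1p
  obtain ⟨hc1, -, -, h2mv⟩ := rt_mem_DeltaKpos.mp h2p
  set A : ℕ → ℕ := fun j => (s⁻¹ ^ j) a with hAdef
  set B : ℕ → ℕ := fun j => (s⁻¹ ^ j) b with hBdef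
  set C : ℕ → ℕ := fun j => (s⁻¹ ^ j) c with hCdef
  have hAstep : ∀ j, s (A (j + 1)) = A j := fun j => step_lemma s a j
  have hBstep : ∀ j, s (B (j + 1)) = B j := fun j => step_lemma s b j
  have hCstep : ∀ j, s (C (j + 1)) = C j := fun j => step_lemma s c j
  have hA0 : A 0 = a := by rw [hAdef]; simp
  have hB0 : B 0 = b := by rw [hBdef]; simp
  have hC0 : C 0 = c := by rw [hCdef]; simp
  have hmidAB : ∀ j, 1 ≤ j → j ≤ k - 1 →
      1 ≤ A j ∧ A j < B j ∧ B j ≤ l + 1 ∧ ¬(s (A j) = A j ∧ s (B j) = B j) := by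
    intro j hj1 hj2
    have h := hηmid j hj1 hj2
    rw [pact_rt] at h
    exact rt_mem_DeltaKpos.mp h
  have hendAB : 1 ≤ B k ∧ B k < A k ∧ A k ≤ l + 1 ∧ ¬(s (A k) = A k ∧ s (B k) = B k) := by
    have h := hηend
    rw [pact_rt] at h
    exact rt_mem_DeltaKneg.mp h
  have hfixiff : ∀ x, s x = x ↔ (x = 0 ∨ (m + 2 ≤ x ∧ x ≤ m + p + 1) ∨ m + p + N + 2 ≤ x) := by
    intro x; rw [hsf]; exact SF_fix_iff m p N x hm2 hN1
  have hnotfix : ∀ x : ℕ, s x ≠ x → ¬(x = 0 ∨ (m + 2 ≤ x ∧ x ≤ m + p + 1) ∨ m + p + N + 2 ≤ x) :=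
    fun x hx hh => hx ((hfixiff x).mpr hh)
  rcases hfix with hsa | hsb
  · -- ============ case Δ^C : s fixes the row a ============
    have hsb' : s b ≠ b := fun hh => hηmv ⟨hsa, hh⟩
    have hsc : s c ≠ c := fun hh => h1mv ⟨hsa, hh⟩
    have haZ : m + 2 ≤ a ∧ a ≤ m + p + 1 := by
      have := (hfixiff a).mp hsa
      omega
    have hcR : m + p + 2 ≤ c ∧ c ≤ m + p + N + 1 := by
      have := hnotfix c hsc
      omega
    have hbR : m + p + 2 ≤ b ∧ b ≤ m + p + N + 1 := by
      have := hnotfix b hsb'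
      omega
    have hAfix : ∀ j, A j = a := fun j => perm_pow_fix s⁻¹ (inv_fix s hsa) j
    have hBmid : ∀ j, 1 ≤ j → j ≤ k - 1 → m + p + 2 ≤ B j ∧ B j ≤ m + p + N + 1 := by
      intro j hj1 hj2
      have h := hmidAB j hj1 hj2
      rw [hAfix j] at h
      have hmv : s (B j) ≠ B j := fun hh => h.2.2.2 ⟨hsa, hh⟩
      have := hnotfix (B j) hmv
      omega
    have hBk : B k = m + 1 ∧ B (k - 1) = m + p + 3 := by
      have h := hendAB
      rw [hAfix k] at h
      have hmv : s (B k) ≠ B k := fun hh => h.2.2.2 ⟨hsa, hh⟩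
      have hnf := hnotfix (B k) hmv
      have hble : B k ≤ m + 1 := by omega
      have hs1 := hBstep (k - 1)
      rw [show k - 1 + 1 = k by omega, hsf] at hs1
      have hge := hBmid (k - 1) (by omega) (by omega)
      exact SF_claimA m p N (B k) (B (k - 1)) hm2 hN1 hble hs1 (by omega)
    have hkN : k ≤ N := by
      by_contra hcon
      have hRN := backtrackR m p N s hsf hm2 hN1 hN2 B hBstep k hBk.1 N (by omega) le_rfl (by omega)
      have hval : Rseq m p N N = m + p + 2 := by unfold Rseq; omega
      have hs1 := hBstep (k - N - 1)
      rw [show k - N - 1 + 1 = k - N by omega, hRN, hval, hsf, SF_mid m p N hm2 hN1] at hs1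
      rcases Nat.eq_zero_or_pos (k - N - 1) with hz | hz
      · rw [hz, hB0] at hs1; omega
      · have := hBmid (k - N - 1) hz (by omega)
        omega
    constructor
    · -- rt a c ∉ Δ̄_K^k
      rintro ⟨hCp, hCmid, hCend⟩
      have hE : 1 ≤ C k ∧ C k < A k ∧ A k ≤ l + 1 ∧ ¬(s (A k) = A k ∧ s (C k) = C k) := by
        have h := hCend
        rw [pact_rt] at h
        exact rt_mem_DeltaKneg.mp h
      have hM : 1 ≤ A (k - 1) ∧ A (k - 1) < C (k - 1) ∧ C (k - 1) ≤ l + 1 ∧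
          ¬(s (A (k - 1)) = A (k - 1) ∧ s (C (k - 1)) = C (k - 1)) := by
        have h := hCmid (k - 1) (by omega) (by omega)
        rw [pact_rt] at h
        exact rt_mem_DeltaKpos.mp h
      rw [hAfix k] at hE
      rw [hAfix (k - 1)] at hM
      have hmv : s (C k) ≠ C k := fun hh => hE.2.2.2 ⟨hsa, hh⟩
      have hmv' : s (C (k - 1)) ≠ C (k - 1) := fun hh => hM.2.2.2 ⟨hsa, hh⟩
      have hnf := hnotfix (C k) hmv
      have hnf' := hnotfix (C (k - 1)) hmv'
      have hle : C k ≤ m + 1 := by omega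
      have hge' : m + p + 2 ≤ C (k - 1) := by omega
      have hs1 := hCstep (k - 1)
      rw [show k - 1 + 1 = k by omega, hsf] at hs1
      have hCk := (SF_claimA m p N (C k) (C (k - 1)) hm2 hN1 hle hs1 (by omega)).1
      have hcb' : c = b := Equiv.injective (s⁻¹ ^ k)
        (show C k = B k by rw [hCk, hBk.1])
      omega
    · -- rt c b ∉ Δ̄_K^k
      rintro ⟨hCp, hCmid, hCend⟩
      have hE : 1 ≤ B k ∧ B k < C k ∧ C k ≤ l + 1 ∧ ¬(s (C k) = C k ∧ s (B k) = B k) := by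
        have h := hCend
        rw [pact_rt] at h
        exact rt_mem_DeltaKneg.mp h
      have hM : 1 ≤ C (k - 1) ∧ C (k - 1) < B (k - 1) ∧ B (k - 1) ≤ l + 1 ∧
          ¬(s (C (k - 1)) = C (k - 1) ∧ s (B (k - 1)) = B (k - 1)) := by
        have h := hCmid (k - 1) (by omega) (by omega)
        rw [pact_rt] at h
        exact rt_mem_DeltaKpos.mp h
      rw [hBk.1] at hE
      rw [hBk.2] at hM
      have hCkmv : s (C k) ≠ C k := by
        intro hh
        apply hsc
        have hcomm := s_pow_inv_comm s k c
        rw [show s ((s⁻¹ ^ k) c) = s (C k) from rfl, hh] at hcomm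
        exact Equiv.injective (s⁻¹ ^ k) hcomm.symm
      have hnf := hnotfix (C k) hCkmv
      have hCkR : m + p + 2 ≤ C k ∧ C k ≤ m + p + N + 1 := by omega
      have hs1 := hCstep (k - 1)
      rw [show k - 1 + 1 = k by omega, hsf] at hs1
      rcases SF_claimC m p N (C k) (C (k - 1)) hm2 hN1 hCkR.1 hCkR.2 hs1 (by omega)
        with ⟨e1, e2⟩ | ⟨e1, e2⟩
      · -- C k = m+p+2
        have hLt := backtrackL m p N s hsf hm2 hN1 C hCstep k e1
        rcases le_or_gt k (m + 1) with hkm | hkm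
        · have hfin := hLt k (by omega) hkm le_rfl
          rw [show k - k = 0 by omega, hC0] at hfin
          unfold Lseq at hfin; omega
        · have h1' := hLt (m + 1) (by omega) le_rfl (by omega)
          have hLv : Lseq m (m + 1) = m + 1 := by unfold Lseq; omega
          rw [show k - (m + 1) = 1 by omega, hLv] at h1'
          have hs0 := hCstep 0
          rw [h1', hC0, hsf, SF_top m p N hm2] at hs0
          have hb0 := backtrackR m p N s hsf hm2 hN1 hN2 B hBstep k hBk.1 k (by omega) hkN le_rfl
          rw [show k - k = 0 by omega, hB0] at hb0
          unfold Rseq at hb0; omega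
      · -- C k = m+p+4, C (k-1) = m+p+2
        have hLt := backtrackL m p N s hsf hm2 hN1 C hCstep (k - 1) e2
        rcases le_or_gt (k - 1) (m + 1) with hkm | hkm
        · have hfin := hLt (k - 1) (by omega) hkm le_rfl
          rw [show k - 1 - (k - 1) = 0 by omega, hC0] at hfin
          unfold Lseq at hfin; omega
        · omega
  · -- ============ case Δ^R : s fixes the column b ============
    have hsa' : s a ≠ a := fun hh => hηmv ⟨hh, hsb⟩
    have hsc : s c ≠ c := fun hh => h2mv ⟨hh, hsb⟩
    have hbZ : m + 2 ≤ b ∧ b ≤ m + p + 1 := by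
      have := (hfixiff b).mp hsb
      omega
    have haL : a ≤ m + 1 := by
      have := hnotfix a hsa'
      omega
    have hcL : c ≤ m + 1 := by
      have := hnotfix c hsc
      omega
    have hBfix : ∀ j, B j = b := fun j => perm_pow_fix s⁻¹ (inv_fix s hsb) j
    have hAmid : ∀ j, 1 ≤ j → j ≤ k - 1 → 1 ≤ A j ∧ A j ≤ m + 1 := by
      intro j hj1 hj2
      have h := hmidAB j hj1 hj2
      rw [hBfix j] at h
      have hmv : s (A j) ≠ A j := fun hh => h.2.2.2 ⟨hh, hsb⟩
      have := hnotfix (A j) hmv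
      omega
    have hAk : A k = m + p + 2 ∧ A (k - 1) = m := by
      have h := hendAB
      rw [hBfix k] at h
      have hmv : s (A k) ≠ A k := fun hh => h.2.2.2 ⟨hh, hsb⟩
      have hnf := hnotfix (A k) hmv
      have hs1 := hAstep (k - 1)
      rw [show k - 1 + 1 = k by omega, hsf] at hs1
      have hle := hAmid (k - 1) (by omega) (by omega)
      exact SF_claimB m p N (A k) (A (k - 1)) hm2 hN1 (by omega) (by omega) hs1 (by omega)
    have hALt := backtrackL m p N s hsf hm2 hN1 A hAstep k hAk.1
    have hkm : k ≤ m + 1 := by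
      by_contra hcon
      have h1' := hALt (m + 1) (by omega) le_rfl (by omega)
      have hLv : Lseq m (m + 1) = m + 1 := by unfold Lseq; omega
      rw [hLv] at h1'
      have hs1 := hAstep (k - (m + 1) - 1)
      rw [show k - (m + 1) - 1 + 1 = k - (m + 1) by omega, h1', hsf, SF_top m p N hm2] at hs1
      rcases Nat.eq_zero_or_pos (k - (m + 1) - 1) with hz | hz
      · rw [hz, hA0] at hs1; omega
      · have := hAmid (k - (m + 1) - 1) hz (by omega)
        omega
    constructor
    · -- rt a c ∉ Δ̄_K^k
      rintro ⟨hCp, hCmid, hCend⟩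
      have hE : 1 ≤ C k ∧ C k < A k ∧ A k ≤ l + 1 ∧ ¬(s (A k) = A k ∧ s (C k) = C k) := by
        have h := hCend
        rw [pact_rt] at h
        exact rt_mem_DeltaKneg.mp h
      have hM : 1 ≤ A (k - 1) ∧ A (k - 1) < C (k - 1) ∧ C (k - 1) ≤ l + 1 ∧
          ¬(s (A (k - 1)) = A (k - 1) ∧ s (C (k - 1)) = C (k - 1)) := by
        have h := hCmid (k - 1) (by omega) (by omega)
        rw [pact_rt] at h
        exact rt_mem_DeltaKpos.mp h
      rw [hAk.1] at hE
      rw [hAk.2] at hM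
      have hCkmv : s (C k) ≠ C k := by
        intro hh
        apply hsc
        have hcomm := s_pow_inv_comm s k c
        rw [show s ((s⁻¹ ^ k) c) = s (C k) from rfl, hh] at hcomm
        exact Equiv.injective (s⁻¹ ^ k) hcomm.symm
      have hnf := hnotfix (C k) hCkmv
      have hCkL : C k ≤ m + 1 := by omega
      have hCk1 : m + 1 ≤ C (k - 1) := by omega
      have hs1 := hCstep (k - 1)
      rw [show k - 1 + 1 = k by omega, hsf] at hs1
      rcases SF_claimD m p N (C k) (C (k - 1)) hm2 hN1 hCkL hs1 hCk1 with ⟨e1, -⟩ | ⟨-, e2⟩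
      · have hRt := backtrackR m p N s hsf hm2 hN1 hN2 C hCstep k e1 k (by omega) (by omega) le_rfl
        rw [show k - k = 0 by omega, hC0] at hRt
        unfold Rseq at hRt; omega
      · have hRt := backtrackR m p N s hsf hm2 hN1 hN2 C hCstep (k - 1) e2 (k - 1)
          (by omega) (by omega) le_rfl
        rw [show k - 1 - (k - 1) = 0 by omega, hC0] at hRt
        unfold Rseq at hRt; omega
    · -- rt c b ∉ Δ̄_K^k
      rintro ⟨hCp, hCmid, hCend⟩
      have hE : 1 ≤ B k ∧ B k < C k ∧ C k ≤ l + 1 ∧ ¬(s (C k) = C k ∧ s (B k) = B k) := by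
        have h := hCend
        rw [pact_rt] at h
        exact rt_mem_DeltaKneg.mp h
      have hM : 1 ≤ C (k - 1) ∧ C (k - 1) < B (k - 1) ∧ B (k - 1) ≤ l + 1 ∧
          ¬(s (C (k - 1)) = C (k - 1) ∧ s (B (k - 1)) = B (k - 1)) := by
        have h := hCmid (k - 1) (by omega) (by omega)
        rw [pact_rt] at h
        exact rt_mem_DeltaKpos.mp h
      rw [hBfix k] at hE
      rw [hBfix (k - 1)] at hM
      have hmv : s (C k) ≠ C k := fun hh => hE.2.2.2 ⟨hh, hsb⟩
      have hmv' : s (C (k - 1)) ≠ C (k - 1) := fun hh => hM.2.2.2 ⟨hh, hsb⟩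
      have hnf := hnotfix (C k) hmv
      have hnf' := hnotfix (C (k - 1)) hmv'
      have hs1 := hCstep (k - 1)
      rw [show k - 1 + 1 = k by omega, hsf] at hs1
      have hCk := (SF_claimB m p N (C k) (C (k - 1)) hm2 hN1 (by omega) (by omega) hs1 (by omega)).1
      have hactr : a = c := Equiv.injective (s⁻¹ ^ k)
        (show A k = C k by rw [hCk, hAk.1])
      omega

-- ==================== evaluation of weylS ====================

lemma weylS_apply (l l' m p N : ℕ) (h5 : 5 ≤ l') (hll : l' ≤ l)
    (hm : m = (l' - 1) / 2) (hp : p = l - l') (hN : N = l' - m) (x : ℕ) :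
    weylS l l' x = SF m p N x := by
  have hm2 : 2 ≤ m := by omega
  simp only [weylS]
  split_ifs with h1 h2 h2
  · simp only [Equiv.Perm.mul_apply, swapProd_eq_sw, swap_eq_tw]
    rw [← hm]
    have := comp_eval1 m p N x hm2 (by omega) (by omega)
    rw [← hp]
    exact this
  · simp only [Equiv.Perm.mul_apply, swapProd_eq_sw, swap_eq_tw]
    rw [← hm]
    have := comp_eval2 m p N x hm2 (by omega) (by omega)
    rw [← hp]
    exact this
  · simp only [Equiv.Perm.mul_apply, swapProd_eq_sw, swap_eq_tw]
    rw [← hm]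
    have := comp_eval3 m p N x hm2 (by omega) (by omega)
    rw [← hp]
    exact this
  · simp only [Equiv.Perm.mul_apply, swapProd_eq_sw, swap_eq_tw]
    rw [← hm]
    have := comp_eval4 m p N x hm2 (by omega) (by omega)
    rw [← hp]
    exact this

/-- for k ≥ 2, if η ∈ Δ̄_K^k ∩ (Δ^C ∪ Δ^R) and η = η₁ + η₂ with
η₁, η₂ ∈ (Δ̄_K)₊, then η₁, η₂ ∉ Δ̄_K^k. -/
theorem stmt12 (l l' m p : ℕ) (h5 : 5 ≤ l') (hll : l' ≤ l)
    (hm : m = (l' - 1) / 2) (hp : p = l - l') :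
    let s := weylS l l'
    ∀ k, 2 ≤ k → ∀ η ∈ DeltaKk l s k ∩ (DeltaC l s ∪ DeltaR l s),
      ∀ η₁ ∈ DeltaKpos l s, ∀ η₂ ∈ DeltaKpos l s, η = η₁ + η₂ →
        η₁ ∉ DeltaKk l s k ∧ η₂ ∉ DeltaKk l s k := by
  intro s k hk η hη η₁ hη₁ η₂ hη₂ hsum
  have hs : s = weylS l l' := rfl
  set N := l' - m with hN
  have hsf : ∀ x, s x = SF m p N x := fun x => by
    rw [hs]; exact weylS_apply l l' m p N h5 hll hm hp hN x
  have hm2 : 2 ≤ m := by omega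
  have hN1 : m + 1 ≤ N := by omega
  have hN2 : N ≤ m + 2 := by omega
  have hl : l = m + p + N := by omega
  obtain ⟨hηk, hηcr⟩ := hη
  -- representations of the three roots
  obtain ⟨a, b, ha1, hab, hbl, heq⟩ := hηk.1.1
  obtain ⟨a₁, b₁, ha1', hab1, hbl1, heq1⟩ := hη₁.1
  obtain ⟨a₂, b₂, ha2', hab2, hbl2, heq2⟩ := hη₂.1
  subst heq heq1 heq2
  -- the fixed row/column
  have hfix : s a = a ∨ s b = b := by
    rcases hηcr with hC | hR
    · left
      have hrow := hC.2
      rw [pact_rt, rowOf_rt (by omega : a ≠ b),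
        rowOf_rt ((Equiv.injective s).ne_iff.mpr (by omega : a ≠ b))] at hrow
      -- hrow : s a = a
      exact hrow
    · right
      have hcol := hR.2
      rw [pact_rt, colOf_rt (by omega : a ≠ b),
        colOf_rt ((Equiv.injective s).ne_iff.mpr (by omega : a ≠ b))] at hcol
      exact hcol
  rcases rt_add_decomp hab hab1 hab2 hsum with ⟨e1, e2, e3⟩ | ⟨e1, e2, e3⟩
  · -- η₁ = rt a c, η₂ = rt c b with c = b₁ = a₂
    subst e1 e2 e3
    exact core l m p N k a₁ b₁ b₂ s hsf hm2 hN1 hN2 hl hk hab1 hab2 hfix hηk hη₁ hη₂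
  · -- η₂ = rt a c, η₁ = rt c b with c = b₂ = a₁
    subst e1 e2 e3
    have := core l m p N k a₂ b₂ b₁ s hsf hm2 hN1 hN2 hl hk hab2 hab1 hfix hηk hη₂ hη₁
    exact ⟨this.2, this.1⟩

end DPW
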